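/- For every finite trace π over 2^P, all LDLf formulas φ₁, φ₂, and every position i: π,i ⊨ ⟨(φ₁?;true)*⟩φ₂ if and only if there exists j with i ≤ j ≤ length(π) such that π,j ⊨ φ₂ and π,k ⊨ φ₁ for every k with i ≤ k < j. In other words, the LDLf formula ⟨(φ₁?;true)*⟩φ₂ has exactly the semantics of the LTLf until operator φ₁ U φ₂ on finite traces. -/
import Mathlib

inductive PropForm (P : Type) : Type
  | tru : PropForm P
  | atom : P → PropForm P
  | not : PropForm P → PropForm P
  | and : PropForm P → PropForm P → PropForm P

def PropForm.Sat {P : Type} (I : Set P) : PropForm P → Prop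
  | .tru => True
  | .atom p => p ∈ I
  | .not ϕ => ¬ PropForm.Sat I ϕ
  | .and ϕ ψ => PropForm.Sat I ϕ ∧ PropForm.Sat I ψ

mutual
inductive LDLf (P : Type) : Type
  | tt : LDLf P
  | neg : LDLf P → LDLf P
  | conj : LDLf P → LDLf P → LDLf P
  | dia : PathExp P → LDLf P → LDLf P

inductive PathExp (P : Type) : Type
  | prop : PropForm P → PathExp P
  | test : LDLf P → PathExp P
  | plus : PathExp P → PathExp P → PathExp P
  | comp : PathExp P → PathExp P → PathExp P
  | star : PathExp P → PathExp P
end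

mutual
def LDLf.SatAt {P : Type} (π : List (Set P)) : LDLf P → ℕ → Prop
  | .tt => fun _ => True
  | .neg φ => fun i => ¬ LDLf.SatAt π φ i
  | .conj φ₁ φ₂ => fun i => LDLf.SatAt π φ₁ i ∧ LDLf.SatAt π φ₂ i
  | .dia ρ φ => fun i => ∃ j, i ≤ j ∧ j ≤ π.length ∧ PathExp.Sem π ρ i j ∧ LDLf.SatAt π φ j

def PathExp.Sem {P : Type} (π : List (Set P)) : PathExp P → ℕ → ℕ → Prop
  | .prop ϕ => fun i j => j = i + 1 ∧ j ≤ π.length ∧ PropForm.Sat (π.getD i ∅) ϕ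
  | .test ψ => fun i j => j = i ∧ LDLf.SatAt π ψ i
  | .plus ρ₁ ρ₂ => fun i j => PathExp.Sem π ρ₁ i j ∨ PathExp.Sem π ρ₂ i j
  | .comp ρ₁ ρ₂ => fun i j => ∃ k, PathExp.Sem π ρ₁ i k ∧ PathExp.Sem π ρ₂ k j
  | .star ρ => Relation.ReflTransGen (PathExp.Sem π ρ)
end

def LDLf.box {P : Type} (ρ : PathExp P) (φ : LDLf P) : LDLf P := .neg (.dia ρ (.neg φ))
def LDLf.ff {P : Type} : LDLf P := .neg .tt
def LDLf.ofProp {P : Type} (ϕ : PropForm P) : LDLf P := .dia (.prop ϕ) .tt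
def LDLf.endf {P : Type} : LDLf P := LDLf.box (.test (LDLf.ofProp .tru)) LDLf.ff
def LDLf.lastf {P : Type} : LDLf P := LDLf.box (.prop .tru) LDLf.endf
def LDLf.Sat {P : Type} (π : List (Set P)) (φ : LDLf P) : Prop := LDLf.SatAt π φ 0

lemma step_iff {P : Type} (π : List (Set P)) (φ₁ : LDLf P) (i j : ℕ) :
    PathExp.Sem π (.comp (.test φ₁) (.prop .tru)) i j ↔
      j = i + 1 ∧ j ≤ π.length ∧ LDLf.SatAt π φ₁ i := by
  simp only [PathExp.Sem, PropForm.Sat]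
  constructor
  · rintro ⟨k, ⟨rfl, h1⟩, rfl, h2, -⟩
    exact ⟨rfl, h2, h1⟩
  · rintro ⟨rfl, h2, h1⟩
    exact ⟨i, ⟨rfl, h1⟩, rfl, h2, trivial⟩

/-- `⟨(φ₁?;true)*⟩φ₂` has exactly the semantics of the LTLf until operator `φ₁ U φ₂`:
it holds at `i` iff there is `j` with `i ≤ j ≤ length(π)` such that `φ₂` holds at `j`
and `φ₁` holds at every `k` with `i ≤ k < j`. -/
theorem dia_star_test_iff_until {P : Type} (π : List (Set P))
    (φ₁ φ₂ : LDLf P) (i : ℕ) :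
    LDLf.SatAt π (LDLf.dia (.star (.comp (.test φ₁) (.prop .tru))) φ₂) i ↔
      ∃ j, i ≤ j ∧ j ≤ π.length ∧ LDLf.SatAt π φ₂ j ∧
        ∀ k, i ≤ k → k < j → LDLf.SatAt π φ₁ k := by
  simp only [LDLf.SatAt, PathExp.Sem]
  constructor
  · rintro ⟨j, hij, hjlen, hstar, hφ₂⟩
    refine ⟨j, hij, hjlen, hφ₂, ?_⟩
    clear hij hjlen hφ₂
    induction hstar with
    | refl => intro k hk hk'; omega
    | tail hbc hstep ih =>
      obtain ⟨k, ⟨rfl, hsat⟩, rfl, hlen, -⟩ := hstep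
      intro k hk hk'
      rcases Nat.lt_or_ge k _ with h | h
      · exact ih k hk h
      · have hke : k = _ := Nat.le_antisymm (by omega) h
        subst hke; exact hsat
  · rintro ⟨j, hij, hjlen, hφ₂, hall⟩
    refine ⟨j, hij, hjlen, ?_, hφ₂⟩
    clear hφ₂
    induction j, hij using Nat.le_induction with
    | base => exact Relation.ReflTransGen.refl
    | succ j hij ih =>
      refine Relation.ReflTransGen.tail (ih (by omega) (fun k h1 h2 => hall k h1 (by omega))) ?_
      exact ⟨j, ⟨rfl, hall j hij (by omega)⟩, rfl, hjlen, trivial⟩
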